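/- For every real t, h((1 − cos t)/2) + h((1 − sin t)/2) ≥ 1, where h is the binary entropy function h(s) = −s·log₂ s − (1−s)·log₂(1−s) (with 0·log₂ 0 = 0). Equality holds at t = 0. -/

import Mathlib

/-!
With `p = (1 - x) / 2` one has `4 p (1 - p) = 1 - x²`, so it suffices to show `h(p) ≥ 4 p (1 - p)`:
the two terms then add up to at least `2 - cos² t - sin² t = 1`. In natural logarithms the gap
`H(p) - 4 log 2 · p (1 - p)` vanishes at `0` and at `1/2`, where it is also critical, and its
second derivative `8 log 2 - 1 / (p (1 - p))` changes sign exactly once on `(0, 1/2)`, at the `c`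
with `c (1 - c) = 1 / (8 log 2)`. So the gap is concave on `[0, c]` and convex on `[c, 1/2]`,
which forces it to be nonnegative.
-/

/-- The binary entropy function `h(s) = −s·log₂ s − (1−s)·log₂(1−s)`
(with the convention `0·log₂ 0 = 0`). -/
noncomputable def binEnt (s : ℝ) : ℝ :=
  -s * Real.logb 2 s - (1 - s) * Real.logb 2 (1 - s)

open Real Set

lemma nonneg_of_concaveOn_of_convexOn {f : ℝ → ℝ} {a b c x : ℝ}
    (hac : a ≤ c) (hcb : c ≤ b) (hconc : ConcaveOn ℝ (Icc a c) f) (hconv : ConvexOn ℝ (Icc c b) f)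
    (ha : 0 ≤ f a) (hb : f b = 0) (hb' : HasDerivAt f 0 b) (hx : x ∈ Icc a b) : 0 ≤ f x := by
  have convex_part : ∀ y ∈ Icc c b, 0 ≤ f y := by
    intro y hy
    rcases hy.2.eq_or_lt with rfl | hyb
    · exact hb.ge
    have := hconv.slope_le_of_hasDerivAt hy (right_mem_Icc.2 hcb) hyb hb'
    rw [slope_def_field, hb, div_nonpos_iff] at this
    rcases this with ⟨-, h⟩ | ⟨h, -⟩ <;> linarith
  rcases le_total x c with hxc | hcx
  · exact (le_min ha (convex_part c (left_mem_Icc.2 hcb))).trans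
      (hconc.min_le_of_mem_Icc (left_mem_Icc.2 hac) (right_mem_Icc.2 hac) ⟨hx.1, hxc⟩)
  · exact convex_part x ⟨hcx, hx.2⟩

lemma exists_mem_Icc_mul_one_sub_eq {q : ℝ} (hq₀ : 0 ≤ q) (hq : q ≤ 4⁻¹) :
    ∃ c ∈ Icc (0 : ℝ) 2⁻¹, c * (1 - c) = q := by
  have hs : √(1 - 4 * q) ^ 2 = 1 - 4 * q := sq_sqrt (by linarith)
  have hs₁ : √(1 - 4 * q) ≤ 1 := sqrt_le_one.2 (by linarith)
  refine ⟨(1 - √(1 - 4 * q)) / 2, ⟨by linarith, by linarith [sqrt_nonneg (1 - 4 * q)]⟩, ?_⟩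
  linear_combination -hs / 4

noncomputable def entropyGap (p : ℝ) : ℝ := binEntropy p - 4 * log 2 * (p * (1 - p))

noncomputable def derivEntropyGap (p : ℝ) : ℝ :=
  log (1 - p) - log p - 4 * log 2 * (1 - 2 * p)

lemma hasDerivAt_entropyGap {p : ℝ} (hp₀ : p ≠ 0) (hp₁ : p ≠ 1) :
    HasDerivAt entropyGap (derivEntropyGap p) p :=
  ((hasDerivAt_binEntropy hp₀ hp₁).sub (((hasDerivAt_id p).mul
    ((hasDerivAt_id p).const_sub 1)).const_mul (4 * log 2))).congr_deriv
    (by simp only [derivEntropyGap, id]; ring)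

lemma hasDerivAt_derivEntropyGap {p : ℝ} (hp₀ : p ≠ 0) (hp₁ : p ≠ 1) :
    HasDerivAt derivEntropyGap (8 * log 2 - (p * (1 - p))⁻¹) p := by
  have h₁ : 1 - p ≠ 0 := sub_ne_zero.2 (Ne.symm hp₁)
  refine (((((hasDerivAt_id p).const_sub 1).log h₁).sub (hasDerivAt_log hp₀)).sub
    ((((hasDerivAt_id p).const_mul 2).const_sub 1).const_mul (4 * log 2))).congr_deriv ?_
  rw [id]
  field_simp
  ring

lemma concaveOn_entropyGap {a b : ℝ} (ha : 0 ≤ a) (hb : b ≤ 1)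
    (h : ∀ p ∈ Ioo a b, p * (1 - p) ≤ (8 * log 2)⁻¹) :
    ConcaveOn ℝ (Icc a b) entropyGap := by
  have hp : ∀ p ∈ Ioo a b, p ≠ 0 ∧ p ≠ 1 := fun p hp ↦
    ⟨(ha.trans_lt hp.1).ne', (hp.2.trans_le hb).ne⟩
  refine concaveOn_of_hasDerivWithinAt2_nonpos (f' := derivEntropyGap)
    (f'' := fun p ↦ 8 * log 2 - (p * (1 - p))⁻¹) (convex_Icc a b)
    (by unfold entropyGap; fun_prop) ?_ ?_ ?_ <;> rw [interior_Icc] <;> intro p hpab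
  · exact (hasDerivAt_entropyGap (hp p hpab).1 (hp p hpab).2).hasDerivWithinAt
  · exact (hasDerivAt_derivEntropyGap (hp p hpab).1 (hp p hpab).2).hasDerivWithinAt
  · have hpos : 0 < p * (1 - p) := mul_pos (ha.trans_lt hpab.1) (by linarith [hpab.2])
    rw [sub_nonpos, le_inv_comm₀ (by positivity) hpos]
    exact h p hpab

lemma convexOn_entropyGap {a b : ℝ} (ha : 0 ≤ a) (hb : b ≤ 1)
    (h : ∀ p ∈ Ioo a b, (8 * log 2)⁻¹ ≤ p * (1 - p)) :
    ConvexOn ℝ (Icc a b) entropyGap := by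
  have hp : ∀ p ∈ Ioo a b, p ≠ 0 ∧ p ≠ 1 := fun p hp ↦
    ⟨(ha.trans_lt hp.1).ne', (hp.2.trans_le hb).ne⟩
  refine convexOn_of_hasDerivWithinAt2_nonneg (f' := derivEntropyGap)
    (f'' := fun p ↦ 8 * log 2 - (p * (1 - p))⁻¹) (convex_Icc a b)
    (by unfold entropyGap; fun_prop) ?_ ?_ ?_ <;> rw [interior_Icc] <;> intro p hpab
  · exact (hasDerivAt_entropyGap (hp p hpab).1 (hp p hpab).2).hasDerivWithinAt
  · exact (hasDerivAt_derivEntropyGap (hp p hpab).1 (hp p hpab).2).hasDerivWithinAt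
  · rw [sub_nonneg]
    exact inv_le_of_inv_le₀ (by positivity) (h p hpab)

lemma four_mul_log_two_mul_le_binEntropy {p : ℝ} (hp₀ : 0 ≤ p) (hp₁ : p ≤ 1) :
    4 * log 2 * (p * (1 - p)) ≤ binEntropy p := by
  wlog hp : p ≤ 2⁻¹ generalizing p
  · simpa [mul_comm] using this (p := 1 - p) (by linarith) (by linarith) (by linarith)
  have hlog : 2⁻¹ < log 2 := by linarith [log_two_gt_d9]
  obtain ⟨c, ⟨hc₀, hc⟩, hcq⟩ := exists_mem_Icc_mul_one_sub_eq (q := (8 * log 2)⁻¹)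
    (by positivity) (by rw [inv_le_inv₀ (by positivity) (by norm_num)]; linarith)
  suffices 0 ≤ entropyGap p by simpa [entropyGap] using this
  refine nonneg_of_concaveOn_of_convexOn hc₀ hc ?_ ?_ (by simp [entropyGap]) ?_ ?_ ⟨hp₀, hp⟩
  · refine concaveOn_entropyGap le_rfl (by linarith) fun x hx ↦ ?_
    nlinarith [hx.1, hx.2]
  · refine convexOn_entropyGap hc₀ (by norm_num) fun x hx ↦ ?_
    nlinarith [hx.1, hx.2]
  · simp only [entropyGap, binEntropy_two_inv]
    ring
  · convert hasDerivAt_entropyGap (p := 2⁻¹) (by norm_num) (by norm_num) using 1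
    norm_num [derivEntropyGap]

lemma binEnt_eq_binEntropy_div_log_two (s : ℝ) : binEnt s = binEntropy s / log 2 := by
  simp only [binEnt, binEntropy, logb, log_inv]
  ring

lemma one_sub_sq_le_binEnt {x : ℝ} (hx₀ : -1 ≤ x) (hx₁ : x ≤ 1) :
    1 - x ^ 2 ≤ binEnt ((1 - x) / 2) := by
  rw [binEnt_eq_binEntropy_div_log_two, le_div_iff₀ (log_pos one_lt_two)]
  calc (1 - x ^ 2) * log 2 = 4 * log 2 * ((1 - x) / 2 * (1 - (1 - x) / 2)) := by ring
    _ ≤ binEntropy ((1 - x) / 2) := four_mul_log_two_mul_le_binEntropy (by linarith) (by linarith)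

/-- For every real `t`,
`h((1 − cos t)/2) + h((1 − sin t)/2) ≥ 1`, with equality at `t = 0`. -/
theorem binEnt_cos_add_binEnt_sin_ge_one (t : ℝ) :
    1 ≤ binEnt ((1 - Real.cos t) / 2) + binEnt ((1 - Real.sin t) / 2) ∧
      binEnt ((1 - Real.cos 0) / 2) + binEnt ((1 - Real.sin 0) / 2) = 1 := by
  constructor
  · have hcos := one_sub_sq_le_binEnt (neg_one_le_cos t) (cos_le_one t)
    have hsin := one_sub_sq_le_binEnt (neg_one_le_sin t) (sin_le_one t)
    linarith [sin_sq_add_cos_sq t]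
  · simp [binEnt_eq_binEntropy_div_log_two, (log_pos one_lt_two).ne']
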